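/- arXiv:2307.11071 — 2 statements merged into one kernel-verified Lean document; each statement's English description precedes it below -/
import Mathlib

section
/- Under the hypotheses of the cone argument for (α, R_{-iθ}A) with A : ℝ/ℤ → SL(2,ℝ) continuous and α irrational, the Lyapunov exponent is given by L(α, R_{-iθ}A) = 2πθ + (1/2)∫_{ℝ/ℤ} ln[(1-|u̇(x)|²)/(1-e^{8πθ}|u̇(x)|²)] dx, where u̇(x) = (u(x)-i)/(u(x)+i) and u is the unstable direction; in particular L(α, R_{-iθ}A) ≥ 2πθ. -/
open Matrix Complex Filter

noncomputable section

/-- Operator norm of a 2×2 complex matrix acting on ℂ². -/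
def opN (A : Matrix (Fin 2) (Fin 2) ℂ) : ℝ :=
  ‖Matrix.toEuclideanCLM (𝕜 := ℂ) (n := Fin 2) A‖

/-- Determinant of the 2×2 matrix with columns u, v. -/
def crossDet (u v : Fin 2 → ℂ) : ℂ := u 0 * v 1 - u 1 * v 0

/-- Euclidean norm of a vector in ℂ². -/
def vnorm (u : Fin 2 → ℂ) : ℝ := Real.sqrt (‖u 0‖ ^ 2 + ‖u 1‖ ^ 2)

/-- Sine-of-angle distance between the directions of two nonzero vectors. -/
def dSin (u v : Fin 2 → ℂ) : ℝ := ‖crossDet u v‖ / (vnorm u * vnorm v)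

/-- Two vectors span the same direction (are parallel). -/
def SameDir (u v : Fin 2 → ℂ) : Prop := crossDet u v = 0

def vI : Fin 2 → ℂ := ![Complex.I, 1]
def vmI : Fin 2 → ℂ := ![-Complex.I, 1]

abbrev SL2C := Matrix.SpecialLinearGroup (Fin 2) ℂ

/-- The set K_{x,y} of B ∈ SL(2,ℂ) sending direction x to i and y to -i. -/
def Kset (x y : Fin 2 → ℂ) : Set SL2C :=
  {B | SameDir ((B : Matrix (Fin 2) (Fin 2) ℂ).mulVec x) vI ∧
       SameDir ((B : Matrix (Fin 2) (Fin 2) ℂ).mulVec y) vmI}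

/-- k(x,y) = inf over K_{x,y} of ‖B‖². -/
def kfun (x y : Fin 2 → ℂ) : ℝ :=
  sInf ((fun B : SL2C => opN (B : Matrix (Fin 2) (Fin 2) ℂ) ^ 2) '' Kset x y)

/-- B is minimizing: ‖B⁻¹·(i,1)‖ = ‖B⁻¹·(-i,1)‖. -/
def Minimizing (B : SL2C) : Prop :=
  vnorm ((((B⁻¹ : SL2C) : Matrix (Fin 2) (Fin 2) ℂ)).mulVec vI) =
  vnorm (((B⁻¹ : SL2C) : Matrix (Fin 2) (Fin 2) ℂ).mulVec vmI)

/-- Rotation matrix R_λ, for complex λ. -/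
def Rmat (l : ℂ) : Matrix (Fin 2) (Fin 2) ℂ :=
  !![Complex.cos (2 * Real.pi * l), -Complex.sin (2 * Real.pi * l);
     Complex.sin (2 * Real.pi * l), Complex.cos (2 * Real.pi * l)]

/-- Diagonal matrix D_μ = diag(μ, μ⁻¹). -/
def Dmat (m : ℂ) : Matrix (Fin 2) (Fin 2) ℂ := !![m, 0; 0, m⁻¹]

/-- Möbius action of a 2×2 complex matrix on ℂ. -/
def moebius (A : Matrix (Fin 2) (Fin 2) ℂ) (z : ℂ) : ℂ :=
  (A 0 0 * z + A 0 1) / (A 1 0 * z + A 1 1)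

/-- Cocycle product B_n(x) = B(x+(n-1)α) ⋯ B(x). -/
def coc (α : ℝ) (B : ℝ → Matrix (Fin 2) (Fin 2) ℂ) : ℕ → ℝ → Matrix (Fin 2) (Fin 2) ℂ
  | 0, _ => 1
  | n + 1, x => B (x + n * α) * coc α B n x

/-- Uniform hyperbolicity of the cocycle (α, B), witnessed by continuous
invariant unstable/stable direction fields U, S with exponential expansion/contraction. -/
def UnifHyp (α : ℝ) (B : ℝ → Matrix (Fin 2) (Fin 2) ℂ) (U S : ℝ → Fin 2 → ℂ) : Prop :=
  Continuous U ∧ Continuous S ∧ (∀ x, U x ≠ 0) ∧ (∀ x, S x ≠ 0) ∧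
  (∀ x, SameDir (U (x + 1)) (U x)) ∧ (∀ x, SameDir (S (x + 1)) (S x)) ∧
  (∀ x, SameDir ((B x).mulVec (U x)) (U (x + α))) ∧
  (∀ x, SameDir ((B x).mulVec (S x)) (S (x + α))) ∧
  ∃ C > 0, ∃ lam > 1, ∀ n : ℕ, ∀ x : ℝ,
    vnorm ((coc α B n x).mulVec (U x)) ≥ C⁻¹ * lam ^ n * vnorm (U x) ∧
    vnorm ((coc α B n x).mulVec (S x)) ≤ C * lam⁻¹ ^ n * vnorm (S x)

/-- The Lyapunov exponent of the cocycle (α, B) is L. -/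
def IsLE (α : ℝ) (B : ℝ → Matrix (Fin 2) (Fin 2) ℂ) (L : ℝ) : Prop :=
  Tendsto (fun n : ℕ => (n : ℝ)⁻¹ * ∫ x in (0:ℝ)..1, Real.log (opN (coc α B n x)))
    atTop (nhds L)

/-- Complexification of a real matrix. -/
def cplx (A : Matrix (Fin 2) (Fin 2) ℝ) : Matrix (Fin 2) (Fin 2) ℂ :=
  A.map (Complex.ofReal)

/-- The denominators q_n of the continued fraction approximants. -/
def qden (α : ℝ) (n : ℕ) : ℝ := (GenContFract.of α).dens n

/-- β(α) = limsup (ln q_{n+1})/q_n. -/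
def betaCF (α : ℝ) : ℝ :=
  Filter.limsup (fun n : ℕ => Real.log (qden α (n + 1)) / qden α n) atTop

end


noncomputable section AuxLemmas

lemma vnorm_eq_norm (u : Fin 2 → ℂ) : vnorm u = ‖(WithLp.equiv 2 (Fin 2 → ℂ)).symm u‖ := by
  rw [EuclideanSpace.norm_eq, vnorm]
  simp [Fin.sum_univ_two]

lemma vnorm_nonneg (u : Fin 2 → ℂ) : 0 ≤ vnorm u := Real.sqrt_nonneg _

lemma vnorm_zero : vnorm 0 = 0 := by
  rw [vnorm]
  simp

lemma vnorm_pos {u : Fin 2 → ℂ} (h : u ≠ 0) : 0 < vnorm u := by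
  rw [vnorm_eq_norm]
  simpa using h

lemma vnorm_smul (c : ℂ) (u : Fin 2 → ℂ) : vnorm (c • u) = ‖c‖ * vnorm u := by
  rw [vnorm_eq_norm, vnorm_eq_norm, ← norm_smul]
  congr 1

lemma vnorm_add_le (u v : Fin 2 → ℂ) : vnorm (u + v) ≤ vnorm u + vnorm v := by
  rw [vnorm_eq_norm, vnorm_eq_norm, vnorm_eq_norm]
  exact norm_add_le _ _

lemma vnorm_mulVec_le (A : Matrix (Fin 2) (Fin 2) ℂ) (u : Fin 2 → ℂ) :
    vnorm (A.mulVec u) ≤ opN A * vnorm u := by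
  rw [vnorm_eq_norm, vnorm_eq_norm]
  have := (Matrix.toEuclideanCLM (𝕜 := ℂ) (n := Fin 2) A).le_opNorm
    ((WithLp.equiv 2 (Fin 2 → ℂ)).symm u)
  exact this

lemma opN_le_of_bound {A : Matrix (Fin 2) (Fin 2) ℂ} {K : ℝ} (hK : 0 ≤ K)
    (h : ∀ u, vnorm (A.mulVec u) ≤ K * vnorm u) : opN A ≤ K := by
  apply ContinuousLinearMap.opNorm_le_bound _ hK
  intro x
  have := h ((WithLp.equiv 2 (Fin 2 → ℂ)) x)
  rw [vnorm_eq_norm, vnorm_eq_norm] at this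
  exact this

lemma ne_zero_iff_comp {u : Fin 2 → ℂ} : u ≠ 0 ↔ u 0 ≠ 0 ∨ u 1 ≠ 0 := by
  constructor
  · intro h
    by_contra hc
    push_neg at hc
    apply h
    funext i
    fin_cases i <;> simp [hc.1, hc.2]
  · rintro (h | h) hu <;> simp [hu] at h

lemma sameDir_smul {u v : Fin 2 → ℂ} (h : SameDir u v) (hv : v ≠ 0) :
    ∃ c : ℂ, u = c • v := by
  rw [SameDir, crossDet, sub_eq_zero] at h
  rcases ne_zero_iff_comp.1 hv with h0 | h1
  · refine ⟨u 0 / v 0, ?_⟩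
    funext i
    fin_cases i
    · simp [div_mul_cancel₀, h0]
    · show u 1 = u 0 / v 0 * v 1
      field_simp
      linear_combination -h
  · refine ⟨u 1 / v 1, ?_⟩
    funext i
    fin_cases i
    · show u 0 = u 1 / v 1 * v 0
      field_simp
      linear_combination h
    · simp [div_mul_cancel₀, h1]

lemma norm_crossDet_le (u v : Fin 2 → ℂ) : ‖crossDet u v‖ ≤ vnorm u * vnorm v := by
  have h1 : ‖crossDet u v‖ ≤ ‖u 0‖ * ‖v 1‖ + ‖u 1‖ * ‖v 0‖ := by
    refine (norm_sub_le _ _).trans ?_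
    simp
  refine h1.trans ?_
  have hu : vnorm u ^ 2 = ‖u 0‖ ^ 2 + ‖u 1‖ ^ 2 := Real.sq_sqrt (by positivity)
  have hv : vnorm v ^ 2 = ‖v 0‖ ^ 2 + ‖v 1‖ ^ 2 := Real.sq_sqrt (by positivity)
  have key : (‖u 0‖ * ‖v 1‖ + ‖u 1‖ * ‖v 0‖) ^ 2 ≤ (vnorm u * vnorm v) ^ 2 := by
    rw [mul_pow, hu, hv]
    nlinarith [sq_nonneg (‖u 0‖ * ‖v 0‖ - ‖u 1‖ * ‖v 1‖)]
  have h0 : 0 ≤ ‖u 0‖ * ‖v 1‖ + ‖u 1‖ * ‖v 0‖ := by positivity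
  calc ‖u 0‖ * ‖v 1‖ + ‖u 1‖ * ‖v 0‖
      = Real.sqrt ((‖u 0‖ * ‖v 1‖ + ‖u 1‖ * ‖v 0‖) ^ 2) := (Real.sqrt_sq h0).symm
    _ ≤ Real.sqrt ((vnorm u * vnorm v) ^ 2) := Real.sqrt_le_sqrt key
    _ = vnorm u * vnorm v := Real.sqrt_sq (mul_nonneg (vnorm_nonneg u) (vnorm_nonneg v))

lemma decomp (U S v : Fin 2 → ℂ) (h : crossDet U S ≠ 0) :
    v = (crossDet v S / crossDet U S) • U + (crossDet U v / crossDet U S) • S := by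
  funext i
  fin_cases i <;>
  · show v _ = crossDet v S / crossDet U S * U _ + crossDet U v / crossDet U S * S _
    rw [crossDet, crossDet, crossDet] at *
    simp only [Fin.zero_eta, Fin.mk_one]
    rw [div_mul_eq_mul_div, div_mul_eq_mul_div, ← add_div, eq_div_iff h]
    ring

lemma R_exp_pos (θ : ℝ) :
    Rmat (-(θ:ℂ) * Complex.I) 0 0 + Complex.I * Rmat (-(θ:ℂ) * Complex.I) 1 0
      = (Real.exp (2 * Real.pi * θ) : ℂ) ∧
    Rmat (-(θ:ℂ) * Complex.I) 0 1 + Complex.I * Rmat (-(θ:ℂ) * Complex.I) 1 1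
      = Complex.I * (Real.exp (2 * Real.pi * θ) : ℂ) ∧
    Rmat (-(θ:ℂ) * Complex.I) 0 0 - Complex.I * Rmat (-(θ:ℂ) * Complex.I) 1 0
      = (Real.exp (-(2 * Real.pi * θ)) : ℂ) ∧
    Rmat (-(θ:ℂ) * Complex.I) 0 1 - Complex.I * Rmat (-(θ:ℂ) * Complex.I) 1 1
      = -Complex.I * (Real.exp (-(2 * Real.pi * θ)) : ℂ) := by
  set s : ℝ := -(2 * Real.pi * θ) with hs
  set v : ℂ := (s : ℂ) * Complex.I with hv
  have h1 : Complex.cos v + Complex.I * Complex.sin v = (Real.exp (2 * Real.pi * θ) : ℂ) := by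
    rw [hv, Complex.cos_mul_I, Complex.sin_mul_I]
    rw [show Complex.cosh (s:ℂ) + Complex.I * (Complex.sinh (s:ℂ) * Complex.I)
        = Complex.cosh (s:ℂ) - Complex.sinh (s:ℂ) by
      linear_combination Complex.sinh (s:ℂ) * Complex.I_sq, Complex.cosh_sub_sinh]
    rw [hs]
    push_cast [Complex.ofReal_exp]
    ring_nf
  have h2 : Complex.cos v - Complex.I * Complex.sin v = (Real.exp (-(2 * Real.pi * θ)) : ℂ) := by
    rw [hv, Complex.cos_mul_I, Complex.sin_mul_I]
    rw [show Complex.cosh (s:ℂ) - Complex.I * (Complex.sinh (s:ℂ) * Complex.I)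
        = Complex.cosh (s:ℂ) + Complex.sinh (s:ℂ) by
      linear_combination (-Complex.sinh (s:ℂ)) * Complex.I_sq, Complex.cosh_add_sinh]
    rw [hs, Complex.ofReal_exp]
  have harg : 2 * (Real.pi : ℂ) * (-(θ:ℂ) * Complex.I) = v := by
    rw [hv, hs]; push_cast; ring
  have e00 : Rmat (-(θ:ℂ) * Complex.I) 0 0 = Complex.cos v := by
    simp [Rmat, ← harg]
  have e01 : Rmat (-(θ:ℂ) * Complex.I) 0 1 = -Complex.sin v := by
    simp [Rmat, ← harg]
  have e10 : Rmat (-(θ:ℂ) * Complex.I) 1 0 = Complex.sin v := by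
    simp [Rmat, ← harg]
  have e11 : Rmat (-(θ:ℂ) * Complex.I) 1 1 = Complex.cos v := by
    simp [Rmat, ← harg]
  rw [e00, e01, e10, e11]
  refine ⟨h1, ?_, h2, ?_⟩
  · linear_combination Complex.I * h1 - Complex.sin v * Complex.I_sq
  · linear_combination (-Complex.I) * h2 - Complex.sin v * Complex.I_sq

lemma normSq_pm (N D : ℂ) :
    Complex.normSq (N + Complex.I * D) - Complex.normSq (N - Complex.I * D)
      = 4 * (N * starRingEnd ℂ D).im := by
  simp only [Complex.normSq_apply, Complex.add_re, Complex.add_im, Complex.sub_re,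
    Complex.sub_im, Complex.mul_re, Complex.mul_im, Complex.I_re, Complex.I_im,
    Complex.conj_re, Complex.conj_im]
  ring

/-- Core algebraic identity for the pointwise Lyapunov computation. -/
lemma core_identity (θ : ℝ) (A : Matrix (Fin 2) (Fin 2) ℝ) (hdet : A.det = 1) (z : ℂ) :
    Real.exp (-(4 * Real.pi * θ)) *
      Complex.normSq ((Rmat (-(θ:ℂ) * Complex.I) * cplx A) 0 0 * z
          + (Rmat (-(θ:ℂ) * Complex.I) * cplx A) 0 1
        + Complex.I * ((Rmat (-(θ:ℂ) * Complex.I) * cplx A) 1 0 * z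
          + (Rmat (-(θ:ℂ) * Complex.I) * cplx A) 1 1))
    - Real.exp (4 * Real.pi * θ) *
      Complex.normSq ((Rmat (-(θ:ℂ) * Complex.I) * cplx A) 0 0 * z
          + (Rmat (-(θ:ℂ) * Complex.I) * cplx A) 0 1
        - Complex.I * ((Rmat (-(θ:ℂ) * Complex.I) * cplx A) 1 0 * z
          + (Rmat (-(θ:ℂ) * Complex.I) * cplx A) 1 1))
    = 4 * z.im := by
  obtain ⟨h1, h2, h3, h4⟩ := R_exp_pos θ
  set R := Rmat (-(θ:ℂ) * Complex.I)
  set a := A 0 0; set b := A 0 1; set c := A 1 0; set d := A 1 1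
  have hdet' : a * d - b * c = 1 := by
    rw [Matrix.det_fin_two] at hdet; exact hdet
  have hB : ∀ i j, (R * cplx A) i j = R i 0 * ((A 0 j : ℝ) : ℂ) + R i 1 * ((A 1 j : ℝ) : ℂ) := by
    intro i j
    rw [Matrix.mul_apply, Fin.sum_univ_two]
    simp [cplx]
  set E := (Real.exp (2 * Real.pi * θ) : ℂ)
  set E' := (Real.exp (-(2 * Real.pi * θ)) : ℂ)
  set P := (a : ℂ) * z + (b : ℂ)
  set Q := (c : ℂ) * z + (d : ℂ)
  have hplus : (R * cplx A) 0 0 * z + (R * cplx A) 0 1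
      + Complex.I * ((R * cplx A) 1 0 * z + (R * cplx A) 1 1) = E * (P + Complex.I * Q) := by
    rw [hB 0 0, hB 0 1, hB 1 0, hB 1 1]
    show _ = E * (P + Complex.I * Q)
    rw [show ∀ w x y u : ℂ, (w * (a:ℂ) + x * (c:ℂ)) * z + (w * (b:ℂ) + x * (d:ℂ))
        + Complex.I * ((y * (a:ℂ) + u * (c:ℂ)) * z + (y * (b:ℂ) + u * (d:ℂ)))
        = (w + Complex.I * y) * ((a:ℂ) * z + (b:ℂ)) + (x + Complex.I * u) * ((c:ℂ) * z + (d:ℂ))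
      from fun w x y u => by ring]
    rw [h1, h2]
    show E * P + Complex.I * E * Q = _
    ring
  have hminus : (R * cplx A) 0 0 * z + (R * cplx A) 0 1
      - Complex.I * ((R * cplx A) 1 0 * z + (R * cplx A) 1 1) = E' * (P - Complex.I * Q) := by
    rw [hB 0 0, hB 0 1, hB 1 0, hB 1 1]
    rw [show ∀ w x y u : ℂ, (w * (a:ℂ) + x * (c:ℂ)) * z + (w * (b:ℂ) + x * (d:ℂ))
        - Complex.I * ((y * (a:ℂ) + u * (c:ℂ)) * z + (y * (b:ℂ) + u * (d:ℂ)))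
        = (w - Complex.I * y) * ((a:ℂ) * z + (b:ℂ)) + (x - Complex.I * u) * ((c:ℂ) * z + (d:ℂ))
      from fun w x y u => by ring]
    rw [h3, h4]
    show E' * P + -Complex.I * E' * Q = _
    ring
  rw [hplus, hminus, Complex.normSq_mul, Complex.normSq_mul]
  have hE : Complex.normSq E = Real.exp (4 * Real.pi * θ) := by
    show Complex.normSq ((Real.exp (2 * Real.pi * θ) : ℝ) : ℂ) = _
    rw [Complex.normSq_ofReal, ← Real.exp_add]
    ring_nf
  have hE' : Complex.normSq E' = Real.exp (-(4 * Real.pi * θ)) := by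
    show Complex.normSq ((Real.exp (-(2 * Real.pi * θ)) : ℝ) : ℂ) = _
    rw [Complex.normSq_ofReal, ← Real.exp_add]
    ring_nf
  rw [hE, hE']
  rw [show Real.exp (-(4 * Real.pi * θ)) * (Real.exp (4 * Real.pi * θ) * Complex.normSq (P + Complex.I * Q))
    = (Real.exp (-(4 * Real.pi * θ)) * Real.exp (4 * Real.pi * θ)) * Complex.normSq (P + Complex.I * Q) from by ring,
    show Real.exp (4 * Real.pi * θ) * (Real.exp (-(4 * Real.pi * θ)) * Complex.normSq (P - Complex.I * Q))
    = (Real.exp (-(4 * Real.pi * θ)) * Real.exp (4 * Real.pi * θ)) * Complex.normSq (P - Complex.I * Q) from by ring,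
    ← Real.exp_add]
  norm_num
  -- goal: normSq (P + I Q) - normSq (P - I Q) = 4 * z.im
  simp only [Complex.normSq_apply, P, Q, Complex.add_re, Complex.add_im, Complex.mul_re,
    Complex.mul_im, Complex.sub_re, Complex.sub_im, Complex.I_re, Complex.I_im,
    Complex.ofReal_re, Complex.ofReal_im]
  ring_nf
  linear_combination 4 * z.im * hdet'

lemma moebius_norm (θ : ℝ) (A : Matrix (Fin 2) (Fin 2) ℝ) (hdet : A.det = 1) (z : ℂ)
    (hz : 0 < z.im)
    (hw : 0 < (moebius (Rmat (-(θ:ℂ) * Complex.I) * cplx A) z).im) :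
    (Rmat (-(θ:ℂ) * Complex.I) * cplx A) 1 0 * z
        + (Rmat (-(θ:ℂ) * Complex.I) * cplx A) 1 1 ≠ 0 ∧
    0 < 1 - Real.exp (8 * Real.pi * θ) *
        ‖(moebius (Rmat (-(θ:ℂ) * Complex.I) * cplx A) z - Complex.I)
          / (moebius (Rmat (-(θ:ℂ) * Complex.I) * cplx A) z + Complex.I)‖ ^ 2 ∧
    (1 - ‖(moebius (Rmat (-(θ:ℂ) * Complex.I) * cplx A) z - Complex.I)
          / (moebius (Rmat (-(θ:ℂ) * Complex.I) * cplx A) z + Complex.I)‖ ^ 2)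
        * (Real.exp (4 * Real.pi * θ) * z.im)
      = (1 - Real.exp (8 * Real.pi * θ) *
          ‖(moebius (Rmat (-(θ:ℂ) * Complex.I) * cplx A) z - Complex.I)
            / (moebius (Rmat (-(θ:ℂ) * Complex.I) * cplx A) z + Complex.I)‖ ^ 2)
        * (Complex.normSq ((Rmat (-(θ:ℂ) * Complex.I) * cplx A) 1 0 * z
            + (Rmat (-(θ:ℂ) * Complex.I) * cplx A) 1 1)
          * (moebius (Rmat (-(θ:ℂ) * Complex.I) * cplx A) z).im) := by
  have hcore := core_identity θ A hdet z
  set B := Rmat (-(θ:ℂ) * Complex.I) * cplx A with hBdef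
  set N := B 0 0 * z + B 0 1 with hN
  set D := B 1 0 * z + B 1 1 with hD
  set w := moebius B z with hwdef
  have hweq : w = N / D := rfl
  -- D ≠ 0
  have hDne : D ≠ 0 := by
    intro h
    rw [hweq, h, div_zero] at hw
    simp at hw
  have hwD : w * D = N := by
    rw [hweq]
    try exact div_mul_cancel₀ _ hDne
  -- Im (N * conj D) = normSq D * w.im
  have hIm : (N * starRingEnd ℂ D).im = Complex.normSq D * w.im := by
    rw [← hwD, mul_assoc, Complex.mul_conj]
    simp [mul_comm]
  have hImpos : 0 < (N * starRingEnd ℂ D).im := by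
    rw [hIm]
    exact mul_pos (Complex.normSq_pos.2 hDne) hw
  -- N + I D ≠ 0
  have hNpD : N + Complex.I * D ≠ 0 := by
    intro h
    rw [h] at hcore
    simp only [Complex.normSq_zero, mul_zero, zero_sub] at hcore
    nlinarith [Complex.normSq_nonneg (N - Complex.I * D), Real.exp_pos (4 * Real.pi * θ), hz]
  have hnsqp : 0 < Complex.normSq (N + Complex.I * D) := Complex.normSq_pos.2 hNpD
  -- ẇ = (N - I D)/(N + I D)
  have hwpI : w + Complex.I = (N + Complex.I * D) / D := by
    rw [hweq]; field_simp; try ring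
  have hwmI : w - Complex.I = (N - Complex.I * D) / D := by
    rw [hweq]; field_simp; try ring
  have hwpIne : w + Complex.I ≠ 0 := by
    rw [hwpI]
    exact div_ne_zero hNpD hDne
  have hdot : (w - Complex.I) / (w + Complex.I) = (N - Complex.I * D) / (N + Complex.I * D) := by
    rw [hwpI, hwmI]
    field_simp
  have hns : ‖(w - Complex.I) / (w + Complex.I)‖ ^ 2
      = Complex.normSq (N - Complex.I * D) / Complex.normSq (N + Complex.I * D) := by
    simp [hdot, Complex.normSq_div, Complex.normSq_eq_norm_sq, norm_div, div_pow]
  -- numerator identities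
  have key1 : Complex.normSq (N + Complex.I * D) - Complex.normSq (N - Complex.I * D)
      = 4 * (N * starRingEnd ℂ D).im := normSq_pm N D
  have key2 : Complex.normSq (N + Complex.I * D)
      - Real.exp (8 * Real.pi * θ) * Complex.normSq (N - Complex.I * D)
      = Real.exp (4 * Real.pi * θ) * (4 * z.im) := by
    have h4 : Real.exp (4 * Real.pi * θ) * Real.exp (-(4 * Real.pi * θ)) = 1 := by
      rw [← Real.exp_add]; simp
    have h8 : Real.exp (4 * Real.pi * θ) * Real.exp (4 * Real.pi * θ)
        = Real.exp (8 * Real.pi * θ) := by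
      rw [← Real.exp_add]; ring_nf
    linear_combination Real.exp (4 * Real.pi * θ) * hcore
      - Complex.normSq (N + Complex.I * D) * h4 + Complex.normSq (N - Complex.I * D) * h8
  constructor
  · exact hDne
  have hpos2 : 0 < 1 - Real.exp (8 * Real.pi * θ) * ‖(w - Complex.I) / (w + Complex.I)‖ ^ 2 := by
    rw [hns, sub_pos, mul_div_assoc', div_lt_one hnsqp]
    nlinarith [key2, mul_pos (Real.exp_pos (4 * Real.pi * θ)) hz]
  refine ⟨hpos2, ?_⟩
  rw [hns]
  rw [hIm] at key1
  field_simp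
  rw [show Real.pi * θ * 8 = 8 * Real.pi * θ by ring]
  linear_combination (Real.exp (4 * Real.pi * θ) * z.im) * key1
    - (Complex.normSq D * w.im) * key2

lemma det_one_mulVec_ne {M : Matrix (Fin 2) (Fin 2) ℂ} (hdet : M.det = 1) {v : Fin 2 → ℂ}
    (hv : v ≠ 0) : M.mulVec v ≠ 0 := by
  intro h
  apply hv
  have hu : IsUnit M.det := by rw [hdet]; exact isUnit_one
  calc v = (M⁻¹ * M).mulVec v := by rw [Matrix.nonsing_inv_mul M hu, Matrix.one_mulVec]
    _ = M⁻¹.mulVec (M.mulVec v) := by rw [← Matrix.mulVec_mulVec]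
    _ = 0 := by rw [h, Matrix.mulVec_zero]

lemma coc_continuous {α : ℝ} {B : ℝ → Matrix (Fin 2) (Fin 2) ℂ} (hB : Continuous B) (n : ℕ) :
    Continuous (fun x => coc α B n x) := by
  induction n with
  | zero => exact continuous_const
  | succ n ih =>
    show Continuous fun x => B (x + n * α) * coc α B n x
    exact (hB.comp (by continuity)).matrix_mul ih

lemma coc_succ (α : ℝ) (B : ℝ → Matrix (Fin 2) (Fin 2) ℂ) (n : ℕ) (x : ℝ) :
    coc α B (n + 1) x = B (x + n * α) * coc α B n x := rfl

lemma coc_mulVec_unstable {α : ℝ} {B : ℝ → Matrix (Fin 2) (Fin 2) ℂ} {U : ℝ → Fin 2 → ℂ}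
    (hU0 : ∀ x, U x ≠ 0) (hdet : ∀ x, (B x).det = 1)
    (hinv : ∀ x, SameDir ((B x).mulVec (U x)) (U (x + α))) (n : ℕ) (x : ℝ) :
    (∃ c : ℂ, c ≠ 0 ∧ (coc α B n x).mulVec (U x) = c • U (x + n * α)) ∧
    vnorm ((coc α B n x).mulVec (U x))
      = vnorm (U x) * ∏ k ∈ Finset.range n,
          (vnorm ((B (x + k * α)).mulVec (U (x + k * α))) / vnorm (U (x + k * α))) := by
  induction n with
  | zero =>
    refine ⟨⟨1, one_ne_zero, ?_⟩, ?_⟩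
    · simp [coc, Matrix.one_mulVec]
    · simp [coc, Matrix.one_mulVec]
  | succ n ih =>
    obtain ⟨⟨c, hc, hceq⟩, hnorm⟩ := ih
    set y := x + n * α with hy
    -- B y applied to U y is parallel to U (y + α), hence a nonzero multiple
    have hBy := hinv y
    have hBne : (B y).mulVec (U y) ≠ 0 := det_one_mulVec_ne (hdet y) (hU0 y)
    -- extract scalar c' with B y (U y) = c' • U (y + α)
    have hUya : U (y + α) ≠ 0 := hU0 _
    have hsmul : ∃ c' : ℂ, (B y).mulVec (U y) = c' • U (y + α) :=
      sameDir_smul hBy hUya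
    obtain ⟨c', hc'eq⟩ := hsmul
    have hc' : c' ≠ 0 := by
      intro h
      rw [h, zero_smul] at hc'eq
      exact hBne hc'eq
    have hyy : x + (↑(n+1):ℝ) * α = y + α := by rw [hy]; push_cast; ring
    have hstep : (coc α B (n + 1) x).mulVec (U x) = (c * c') • U (x + ↑(n+1) * α) := by
      rw [coc_succ, ← Matrix.mulVec_mulVec, hceq, Matrix.mulVec_smul, ← hy, hc'eq, smul_smul, hyy]
    constructor
    · exact ⟨c * c', mul_ne_zero hc hc', hstep⟩
    · rw [hstep, vnorm_smul, Finset.prod_range_succ, ← hy]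
      have h1 : vnorm ((B y).mulVec (U y)) = ‖c'‖ * vnorm (U (y + α)) := by
        rw [hc'eq, vnorm_smul]
      have hUy : 0 < vnorm (U y) := vnorm_pos (hU0 y)
      have hUya' : 0 < vnorm (U (y + α)) := vnorm_pos (hU0 _)
      have hcn : vnorm ((coc α B n x).mulVec (U x)) = ‖c‖ * vnorm (U y) := by
        rw [hceq, vnorm_smul]
      rw [hcn] at hnorm
      rw [norm_mul, hyy, h1, ← mul_assoc, ← hnorm]
      field_simp

lemma continuous_vnorm : Continuous vnorm := by
  unfold vnorm
  exact Real.continuous_sqrt.comp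
    ((((continuous_apply (0 : Fin 2)).norm.pow 2).add ((continuous_apply (1 : Fin 2)).norm.pow 2)))

lemma vnorm_ratio {V : Fin 2 → ℂ} (h : V 1 ≠ 0) :
    vnorm V = ‖V 1‖ * Real.sqrt (‖V 0 / V 1‖ ^ 2 + 1) := by
  have h1 : (0:ℝ) < ‖V 1‖ := norm_pos_iff.2 h
  have h2 : ‖V 0 / V 1‖ ^ 2 + 1 = (‖V 0‖ ^ 2 + ‖V 1‖ ^ 2) / ‖V 1‖ ^ 2 := by
    rw [norm_div, div_pow]
    have hb : ‖V 1‖ ≠ 0 := by simpa using h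
    field_simp
  rw [vnorm, h2, Real.sqrt_div (by positivity), Real.sqrt_sq h1.le]
  rw [mul_div_assoc']
  rw [mul_comm, mul_div_assoc, div_self (ne_of_gt h1), mul_one]

lemma crossDet_smul_left (c : ℂ) (u v : Fin 2 → ℂ) :
    crossDet (c • u) v = c * crossDet u v := by
  simp [crossDet]
  ring

lemma continuous_opN : Continuous opN := by
  have : Continuous (fun M : Matrix (Fin 2) (Fin 2) ℂ =>
      (Matrix.toEuclideanCLM (𝕜 := ℂ) (n := Fin 2) M :
        EuclideanSpace ℂ (Fin 2) →L[ℂ] EuclideanSpace ℂ (Fin 2))) := by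
    exact LinearMap.continuous_of_finiteDimensional
      ({ toFun := fun M => Matrix.toEuclideanCLM (𝕜 := ℂ) (n := Fin 2) M,
         map_add' := fun a b => map_add _ a b,
         map_smul' := fun c a => map_smul (Matrix.toEuclideanCLM (𝕜 := ℂ) (n := Fin 2)) c a } :
       Matrix (Fin 2) (Fin 2) ℂ →ₗ[ℂ] (EuclideanSpace ℂ (Fin 2) →L[ℂ] EuclideanSpace ℂ (Fin 2)))
  exact this.norm

lemma coc_det {α : ℝ} {B : ℝ → Matrix (Fin 2) (Fin 2) ℂ} (hd : ∀ x, (B x).det = 1) (n : ℕ)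
    (x : ℝ) : (coc α B n x).det = 1 := by
  induction n with
  | zero => simp [coc]
  | succ n ih =>
    show ((B (x + n * α)) * coc α B n x).det = 1
    rw [Matrix.det_mul, hd, ih, one_mul]

lemma Rmat_det (l : ℂ) : (Rmat l).det = 1 := by
  rw [Rmat, Matrix.det_fin_two_of]
  have := Complex.sin_sq_add_cos_sq (2 * Real.pi * l)
  linear_combination this

lemma cplx_det {A : Matrix (Fin 2) (Fin 2) ℝ} (h : A.det = 1) : (cplx A).det = 1 := by
  rw [Matrix.det_fin_two]
  have h' := h
  rw [Matrix.det_fin_two] at h'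
  simp only [cplx, Matrix.map_apply]
  push_cast
  exact_mod_cast congrArg (Complex.ofReal) h'

def phiF (θ : ℝ) (U : ℝ → Fin 2 → ℂ) (x : ℝ) : ℝ :=
  Real.log ((1 - ‖(U x 0 / U x 1 - Complex.I) / (U x 0 / U x 1 + Complex.I)‖ ^ 2) /
    (1 - Real.exp (8 * Real.pi * θ) *
      ‖(U x 0 / U x 1 - Complex.I) / (U x 0 / U x 1 + Complex.I)‖ ^ 2))

end AuxLemmas

set_option maxHeartbeats 1000000 in
/-- exact formula for the Lyapunov exponent of (α, R_{-iθ}A). -/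
theorem stmt8 (α : ℝ) (hα : Irrational α) (A : ℝ → Matrix (Fin 2) (Fin 2) ℝ)
    (hcont : Continuous A) (hdet : ∀ x, (A x).det = 1) (hper : ∀ x, A (x + 1) = A x)
    (θ : ℝ) (hθ : 0 < θ) (U S : ℝ → Fin 2 → ℂ)
    (hUH : UnifHyp α (fun x => Rmat (-(θ : ℂ) * Complex.I) * cplx (A x)) U S)
    (hU : ∀ x : ℝ, U x 1 ≠ 0 ∧ 0 < (U x 0 / U x 1).im ∧
      ‖(U x 0 / U x 1 - Complex.I) / (U x 0 / U x 1 + Complex.I)‖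
        < Real.exp (-(4 * Real.pi * θ))) :
    IsLE α (fun x => Rmat (-(θ : ℂ) * Complex.I) * cplx (A x))
      (2 * Real.pi * θ + (1 / 2) * ∫ x in (0:ℝ)..1,
        Real.log ((1 - ‖(U x 0 / U x 1 - Complex.I) / (U x 0 / U x 1 + Complex.I)‖ ^ 2) /
          (1 - Real.exp (8 * Real.pi * θ) *
            ‖(U x 0 / U x 1 - Complex.I) / (U x 0 / U x 1 + Complex.I)‖ ^ 2))) ∧
    2 * Real.pi * θ ≤ 2 * Real.pi * θ + (1 / 2) * ∫ x in (0:ℝ)..1,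
        Real.log ((1 - ‖(U x 0 / U x 1 - Complex.I) / (U x 0 / U x 1 + Complex.I)‖ ^ 2) /
          (1 - Real.exp (8 * Real.pi * θ) *
            ‖(U x 0 / U x 1 - Complex.I) / (U x 0 / U x 1 + Complex.I)‖ ^ 2)) := by
  classical
  obtain ⟨hUc, hSc, hU0, hS0, hUper, hSper, hUinv, hSinv, C, hCpos, lam, hlam, hgrow⟩ := hUH
  set Bf : ℝ → Matrix (Fin 2) (Fin 2) ℂ := fun x => Rmat (-(θ:ℂ) * Complex.I) * cplx (A x)
    with hBf
  have hpi : (0:ℝ) < Real.pi := Real.pi_pos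
  have hU1 : ∀ x : ℝ, U x 1 ≠ 0 := fun x => (hU x).1
  have huIm : ∀ x : ℝ, 0 < (U x 0 / U x 1).im := fun x => (hU x).2.1
  have hud : ∀ x : ℝ, ‖(U x 0 / U x 1 - Complex.I) / (U x 0 / U x 1 + Complex.I)‖
      < Real.exp (-(4 * Real.pi * θ)) := fun x => (hU x).2.2
  have hθ8one : (1:ℝ) ≤ Real.exp (8 * Real.pi * θ) := Real.one_le_exp (by positivity)
  have hBdet : ∀ x, (Bf x).det = 1 := by
    intro x
    show (Rmat (-(θ:ℂ) * Complex.I) * cplx (A x)).det = 1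
    rw [Matrix.det_mul, Rmat_det, cplx_det (hdet x), one_mul]
  have hBcont : Continuous Bf :=
    continuous_const.matrix_mul (hcont.matrix_map Complex.continuous_ofReal)
  have hBper : ∀ x, Bf (x + 1) = Bf x := by
    intro x
    show Rmat (-(θ:ℂ) * Complex.I) * cplx (A (x+1)) = Rmat (-(θ:ℂ) * Complex.I) * cplx (A x)
    rw [hper]
  have hucont : Continuous (fun x : ℝ => U x 0 / U x 1) :=
    Continuous.div ((continuous_apply _).comp hUc) ((continuous_apply _).comp hUc) hU1
  have hUsmul : ∀ x : ℝ, ∃ c : ℂ, c ≠ 0 ∧ U (x+1) = c • U x := by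
    intro x
    obtain ⟨c, hc⟩ := sameDir_smul (hUper x) (hU0 x)
    exact ⟨c, fun h => hU0 (x+1) (by rw [hc, h, zero_smul]), hc⟩
  have huper : ∀ x : ℝ, U (x+1) 0 / U (x+1) 1 = U x 0 / U x 1 := by
    intro x
    obtain ⟨c, hc0, hc⟩ := hUsmul x
    rw [hc]
    show c * U x 0 / (c * U x 1) = _
    rw [mul_div_mul_left _ _ hc0]
  have hupIne : ∀ x : ℝ, U x 0 / U x 1 + Complex.I ≠ 0 := by
    intro x h
    have h2 : (U x 0 / U x 1).im = -1 := by
      have h3 : U x 0 / U x 1 = -Complex.I := by linear_combination h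
      rw [h3]
      simp
    have := huIm x
    rw [h2] at this
    linarith
  have hudsq : ∀ x : ℝ, Real.exp (8 * Real.pi * θ) *
      ‖(U x 0 / U x 1 - Complex.I) / (U x 0 / U x 1 + Complex.I)‖ ^ 2 < 1 := by
    intro x
    have h := hud x
    have h0 : 0 ≤ ‖(U x 0 / U x 1 - Complex.I) / (U x 0 / U x 1 + Complex.I)‖ := norm_nonneg _
    have hE : Real.exp (8 * Real.pi * θ) *
        (Real.exp (-(4 * Real.pi * θ)) * Real.exp (-(4 * Real.pi * θ))) = 1 := by
      rw [← Real.exp_add, ← Real.exp_add,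
        show 8 * Real.pi * θ + (-(4 * Real.pi * θ) + -(4 * Real.pi * θ)) = 0 by ring,
        Real.exp_zero]
    nlinarith [Real.exp_pos (8 * Real.pi * θ), Real.exp_pos (-(4 * Real.pi * θ))]
  have hden_pos : ∀ x : ℝ, 0 < 1 - Real.exp (8 * Real.pi * θ) *
      ‖(U x 0 / U x 1 - Complex.I) / (U x 0 / U x 1 + Complex.I)‖ ^ 2 := by
    intro x
    linarith [hudsq x]
  have hnum_pos : ∀ x : ℝ,
      0 < 1 - ‖(U x 0 / U x 1 - Complex.I) / (U x 0 / U x 1 + Complex.I)‖ ^ 2 := by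
    intro x
    have h1 := hudsq x
    nlinarith [sq_nonneg ‖(U x 0 / U x 1 - Complex.I) / (U x 0 / U x 1 + Complex.I)‖]
  have hudcont : Continuous (fun x : ℝ =>
      ‖(U x 0 / U x 1 - Complex.I) / (U x 0 / U x 1 + Complex.I)‖ ^ 2) :=
    (((hucont.sub continuous_const).div (hucont.add continuous_const) hupIne).norm.pow 2)
  have hφcont : Continuous (phiF θ U) := by
    unfold phiF
    exact ((continuous_const.sub hudcont).div
      (continuous_const.sub (continuous_const.mul hudcont))
      (fun x => (hden_pos x).ne')).log
      (fun x => (div_pos (hnum_pos x) (hden_pos x)).ne')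
  have hφper : Function.Periodic (phiF θ U) 1 := by
    intro x
    unfold phiF
    rw [huper x]
  set Hf : ℝ → ℝ := fun x => Real.log (‖U x 0 / U x 1‖ ^ 2 + 1) / 2
      - Real.log ((U x 0 / U x 1).im) / 2 with hHf
  have hHfcont : Continuous Hf := by
    rw [hHf]
    exact (((hucont.norm.pow 2).add continuous_const).log
        (fun x => (by positivity : (0:ℝ) < ‖U x 0 / U x 1‖ ^ 2 + 1).ne')).div_const 2 |>.sub
      (((Complex.continuous_im.comp hucont).log (fun x => (huIm x).ne')).div_const 2)
  have hHfper : Function.Periodic Hf 1 := by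
    intro x
    simp only [hHf, huper x]
  set per : ℝ → ℝ := fun x => vnorm ((Bf x).mulVec (U x)) / vnorm (U x) with hperdef
  have hBUne : ∀ x, (Bf x).mulVec (U x) ≠ 0 := fun x => det_one_mulVec_ne (hBdet x) (hU0 x)
  have hperpos : ∀ x, 0 < per x := fun x =>
    div_pos (vnorm_pos (hBUne x)) (vnorm_pos (hU0 x))
  have hpercont : Continuous per :=
    (continuous_vnorm.comp (hBcont.matrix_mulVec hUc)).div (continuous_vnorm.comp hUc)
      (fun x => (vnorm_pos (hU0 x)).ne')
  have hperiodic_per : Function.Periodic per 1 := by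
    intro x
    obtain ⟨c, hc0, hc⟩ := hUsmul x
    show vnorm ((Bf (x+1)).mulVec (U (x+1))) / vnorm (U (x+1))
        = vnorm ((Bf x).mulVec (U x)) / vnorm (U x)
    rw [hBper, hc, Matrix.mulVec_smul, vnorm_smul, vnorm_smul,
      mul_div_mul_left _ _ (norm_ne_zero_iff.2 hc0)]
  -- pointwise identity
  have hlogper : ∀ x : ℝ, Real.log (per x)
      = 2 * Real.pi * θ + (1/2) * phiF θ U (x + α) + (Hf (x + α) - Hf x) := by
    intro x
    have hBfx : Rmat (-(θ:ℂ) * Complex.I) * cplx (A x) = Bf x := rfl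
    set z := U x 0 / U x 1 with hz
    set N := Bf x 0 0 * z + Bf x 0 1 with hN
    set D := Bf x 1 0 * z + Bf x 1 1 with hD
    have hUx0 : U x 0 = z * U x 1 := by
      rw [hz, div_mul_cancel₀ _ (hU1 x)]
    have hmul : (Bf x).mulVec (U x) = U x 1 • ![N, D] := by
      funext i
      fin_cases i
      · show (Bf x).mulVec (U x) 0 = (U x 1 • ![N, D]) 0
        simp only [Pi.smul_apply, smul_eq_mul, Matrix.cons_val_zero, Matrix.mulVec,
          dotProduct, Fin.sum_univ_two]
        rw [hN, hUx0]
        ring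
      · show (Bf x).mulVec (U x) 1 = (U x 1 • ![N, D]) 1
        simp only [Pi.smul_apply, smul_eq_mul, Matrix.cons_val_one, Matrix.head_cons,
          Matrix.cons_val_zero, Matrix.mulVec, dotProduct, Fin.sum_univ_two]
        rw [hD, hUx0]
        ring
    have hcr : N * U (x + α) 1 = D * U (x + α) 0 := by
      have h := hUinv x
      rw [SameDir, hmul, crossDet_smul_left] at h
      rcases mul_eq_zero.1 h with h' | h'
      · exact absurd h' (hU1 x)
      · rw [crossDet] at h'
        simp only [Matrix.cons_val_zero, Matrix.cons_val_one, Matrix.head_cons] at h'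
        linear_combination h'
    have hBUnex : (Bf x).mulVec (U x) ≠ 0 := hBUne x
    have hDne : D ≠ 0 := by
      intro h0
      have hN0 : N = 0 := by
        have h1 := hcr
        rw [h0, zero_mul] at h1
        exact (mul_eq_zero.1 h1).resolve_right (hU1 (x + α))
      apply hBUnex
      rw [hmul, hN0, h0]
      funext i
      fin_cases i <;> simp
    have hND : N / D = U (x + α) 0 / U (x + α) 1 := by
      rw [div_eq_div_iff hDne (hU1 (x + α))]
      linear_combination hcr
    have hmz : moebius (Bf x) z = U (x + α) 0 / U (x + α) 1 := by
      show N / D = _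
      exact hND
    have hwim : 0 < (moebius (Rmat (-(θ:ℂ) * Complex.I) * cplx (A x)) z).im := by
      show 0 < (moebius (Bf x) z).im
      rw [hmz]
      exact huIm (x + α)
    obtain ⟨hD2, hpos2, heq⟩ := moebius_norm θ (A x) (hdet x) z (huIm x) hwim
    rw [hBfx] at hD2 hpos2 heq
    rw [← hD] at heq
    rw [hmz] at hpos2 heq
    -- the norm of the unstable direction via ratios
    have hvnormU : vnorm (U x) = ‖U x 1‖ * Real.sqrt (‖z‖^2 + 1) := by
      rw [vnorm_ratio (hU1 x), ← hz]
    have hvnormBU : vnorm ((Bf x).mulVec (U x))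
        = ‖U x 1‖ * (‖D‖ * Real.sqrt (‖U (x + α) 0 / U (x + α) 1‖^2 + 1)) := by
      rw [hmul, vnorm_smul, vnorm_ratio (show (![N, D]) 1 ≠ 0 by simpa using hDne)]
      simp only [Matrix.cons_val_zero, Matrix.cons_val_one, Matrix.head_cons]
      rw [hND]
    have hperx : per x = ‖D‖ * (Real.sqrt (‖U (x + α) 0 / U (x + α) 1‖^2 + 1)
        / Real.sqrt (‖z‖^2 + 1)) := by
      show vnorm ((Bf x).mulVec (U x)) / vnorm (U x) = _
      rw [hvnormBU, hvnormU, mul_div_mul_left _ _ (norm_ne_zero_iff.2 (hU1 x)),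
        mul_div_assoc]
    have hsz : 0 < Real.sqrt (‖z‖^2 + 1) := Real.sqrt_pos.2 (by positivity)
    have hsz' : 0 < Real.sqrt (‖U (x + α) 0 / U (x + α) 1‖^2 + 1) :=
      Real.sqrt_pos.2 (by positivity)
    have hDpos : 0 < ‖D‖ := norm_pos_iff.2 hDne
    rw [hperx, Real.log_mul hDpos.ne' (div_pos hsz' hsz).ne', Real.log_div hsz'.ne' hsz.ne',
      Real.log_sqrt (by positivity), Real.log_sqrt (by positivity)]
    set s' := ‖(U (x + α) 0 / U (x + α) 1 - Complex.I) / (U (x + α) 0 / U (x + α) 1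
      + Complex.I)‖ with hs'
    have hs'num : 0 < 1 - s'^2 := hnum_pos (x + α)
    have hs'den : 0 < 1 - Real.exp (8 * Real.pi * θ) * s'^2 := hden_pos (x + α)
    have hzim : 0 < z.im := huIm x
    have hu'im : 0 < (U (x + α) 0 / U (x + α) 1).im := huIm (x + α)
    have hnormSqD : Complex.normSq D = ‖D‖^2 := by
      rw [Complex.normSq_eq_norm_sq]
    have hD2' : (0:ℝ) < Complex.normSq D := by
      rw [hnormSqD]
      positivity
    have h1 := congrArg Real.log heq
    rw [Real.log_mul hs'num.ne' (mul_pos (Real.exp_pos _) hzim).ne',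
      Real.log_mul (Real.exp_pos _).ne' hzim.ne', Real.log_exp,
      Real.log_mul hs'den.ne' (mul_pos hD2' hu'im).ne',
      Real.log_mul hD2'.ne' hu'im.ne', hnormSqD, Real.log_pow] at h1
    push_cast at h1
    have hφval : phiF θ U (x + α)
        = Real.log (1 - s'^2) - Real.log (1 - Real.exp (8 * Real.pi * θ) * s'^2) := by
      unfold phiF
      rw [← hs']
      exact Real.log_div hs'num.ne' hs'den.ne'
    have hHf1 : Hf (x + α) = Real.log (‖U (x + α) 0 / U (x + α) 1‖^2 + 1) / 2
        - Real.log ((U (x + α) 0 / U (x + α) 1).im) / 2 := by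
      simp only [hHf]
    have hHf2 : Hf x = Real.log (‖z‖^2 + 1) / 2 - Real.log (z.im) / 2 := by
      simp only [hHf, ← hz]
    rw [hφval, hHf1, hHf2]
    linarith [h1]
  -- integral identity
  have hIper : (∫ x in (0:ℝ)..1, Real.log (per x))
      = 2 * Real.pi * θ + (1/2) * ∫ x in (0:ℝ)..1, phiF θ U x := by
    have hφacont : Continuous fun x => phiF θ U (x + α) := hφcont.comp (continuous_add_right α)
    have hHacont : Continuous fun x => Hf (x + α) := hHfcont.comp (continuous_add_right α)
    have h1 : ∫ x in (0:ℝ)..1, Real.log (per x)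
        = ∫ x in (0:ℝ)..1,
            (2 * Real.pi * θ + ((1/2) * phiF θ U (x + α) + (Hf (x + α) - Hf x))) := by
      apply intervalIntegral.integral_congr
      intro x _
      show Real.log (per x) = 2 * Real.pi * θ + ((1/2) * phiF θ U (x + α) + (Hf (x + α) - Hf x))
      rw [hlogper x]
      ring
    rw [h1]
    have i1 : IntervalIntegrable (fun x => (1/2) * phiF θ U (x + α))
        MeasureTheory.volume 0 1 := (continuous_const.mul hφacont).intervalIntegrable _ _
    have i2 : IntervalIntegrable (fun x => Hf (x + α) - Hf x) MeasureTheory.volume 0 1 :=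
      (hHacont.sub hHfcont).intervalIntegrable _ _
    rw [intervalIntegral.integral_add intervalIntegrable_const (i1.add i2),
      intervalIntegral.integral_add i1 i2, intervalIntegral.integral_const,
      intervalIntegral.integral_const_mul]
    have hshiftφ : (∫ x in (0:ℝ)..1, phiF θ U (x + α)) = ∫ x in (0:ℝ)..1, phiF θ U x := by
      rw [intervalIntegral.integral_comp_add_right (fun x => phiF θ U x) α]
      have h := hφper.intervalIntegral_add_eq α 0
      rw [zero_add] at h
      rw [show (0:ℝ) + α = α from zero_add _, show (1:ℝ) + α = α + 1 from add_comm _ _]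
      exact h
    have hHint : (∫ x in (0:ℝ)..1, (Hf (x + α) - Hf x)) = 0 := by
      rw [intervalIntegral.integral_sub (hHacont.intervalIntegrable _ _)
        (hHfcont.intervalIntegrable _ _)]
      have hshiftH : (∫ x in (0:ℝ)..1, Hf (x + α)) = ∫ x in (0:ℝ)..1, Hf x := by
        rw [intervalIntegral.integral_comp_add_right (fun x => Hf x) α]
        have h := hHfper.intervalIntegral_add_eq α 0
        rw [zero_add] at h
        rw [show (0:ℝ) + α = α from zero_add _, show (1:ℝ) + α = α + 1 from add_comm _ _]
        exact h
      rw [hshiftH, sub_self]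
    rw [hshiftφ, hHint]
    simp
  -- uniform transversality
  have hCross : ∀ x : ℝ, crossDet (U x) (S x) ≠ 0 := by
    intro x h
    obtain ⟨c, hc⟩ := sameDir_smul h (hS0 x)
    have hc0 : c ≠ 0 := fun h' => hU0 x (by rw [hc, h', zero_smul])
    obtain ⟨n, hn⟩ := pow_unbounded_of_one_lt (C * C) hlam
    obtain ⟨h1, h2⟩ := hgrow n x
    rw [hc, Matrix.mulVec_smul, vnorm_smul, vnorm_smul] at h1
    have hvS := vnorm_pos (hS0 x)
    have hcpos : 0 < ‖c‖ := norm_pos_iff.2 hc0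
    have hlam0 : 0 < lam := lt_trans one_pos hlam
    have hlamn : 1 ≤ lam ^ n := one_le_pow₀ hlam.le
    have hinv : lam⁻¹ ^ n = (lam ^ n)⁻¹ := inv_pow lam n
    rw [hinv] at h2
    have hlampos : 0 < lam ^ n := by positivity
    have hkey : C⁻¹ * lam ^ n * vnorm (S x) ≤ C * (lam ^ n)⁻¹ * vnorm (S x) := by
      have := le_trans h1 (by nlinarith [h2] : ‖c‖ * vnorm ((coc α Bf n x).mulVec (S x))
          ≤ ‖c‖ * (C * (lam ^ n)⁻¹ * vnorm (S x)))
      nlinarith [this]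
    have hCinv : 0 < C⁻¹ := inv_pos.2 hCpos
    have h3 : C⁻¹ * lam ^ n ≤ C * (lam ^ n)⁻¹ := by nlinarith [hkey, hvS]
    have h4 : lam ^ n * lam ^ n ≤ C * C := by
      have hi : 0 < (lam ^ n)⁻¹ := by positivity
      have := mul_le_mul_of_nonneg_left h3 (le_of_lt (mul_pos hCpos hlampos))
      rw [show C * lam ^ n * (C⁻¹ * lam ^ n) = (C * C⁻¹) * (lam ^ n * lam ^ n) by ring,
        mul_inv_cancel₀ hCpos.ne', one_mul] at this
      rw [show C * lam ^ n * (C * (lam ^ n)⁻¹) = (C * C) * (lam ^ n * (lam ^ n)⁻¹) by ring,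
        mul_inv_cancel₀ hlampos.ne', mul_one] at this
      exact this
    nlinarith [h4, hn, hlamn]
  -- minimum of the angle function on [0,1]
  have hcrcont : Continuous fun x => crossDet (U x) (S x) := by
    show Continuous fun x => U x 0 * S x 1 - U x 1 * S x 0
    exact (((continuous_apply _).comp hUc).mul ((continuous_apply _).comp hSc)).sub
      (((continuous_apply _).comp hUc).mul ((continuous_apply _).comp hSc))
  have hdUScont : Continuous fun x => ‖crossDet (U x) (S x)‖ / (vnorm (U x) * vnorm (S x)) :=
    (hcrcont.norm).div ((continuous_vnorm.comp hUc).mul (continuous_vnorm.comp hSc))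
      (fun x => (mul_pos (vnorm_pos (hU0 x)) (vnorm_pos (hS0 x))).ne')
  obtain ⟨x₀, hx₀, hmin⟩ := isCompact_Icc.exists_isMinOn (Set.nonempty_Icc.2 zero_le_one)
    hdUScont.continuousOn
  set δ := ‖crossDet (U x₀) (S x₀)‖ / (vnorm (U x₀) * vnorm (S x₀)) with hδ
  have hδpos : 0 < δ := div_pos (norm_pos_iff.2 (hCross x₀))
    (mul_pos (vnorm_pos (hU0 x₀)) (vnorm_pos (hS0 x₀)))
  have hδle : ∀ x ∈ Set.Icc (0:ℝ) 1,
      δ * (vnorm (U x) * vnorm (S x)) ≤ ‖crossDet (U x) (S x)‖ := by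
    intro x hx
    have h := hmin hx
    have hpos : 0 < vnorm (U x) * vnorm (S x) :=
      mul_pos (vnorm_pos (hU0 x)) (vnorm_pos (hS0 x))
    calc δ * (vnorm (U x) * vnorm (S x))
        ≤ (‖crossDet (U x) (S x)‖ / (vnorm (U x) * vnorm (S x)))
            * (vnorm (U x) * vnorm (S x)) := by
          exact mul_le_mul_of_nonneg_right h hpos.le
      _ = ‖crossDet (U x) (S x)‖ := div_mul_cancel₀ _ hpos.ne'
  set K2 := (1 + C^2) / δ with hK2
  have hK2pos : 0 < K2 := div_pos (by positivity) hδpos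
  -- lower bound for opN
  have hlow : ∀ (n : ℕ) (x : ℝ),
      vnorm ((coc α Bf n x).mulVec (U x)) / vnorm (U x) ≤ opN (coc α Bf n x) := by
    intro n x
    rw [div_le_iff₀ (vnorm_pos (hU0 x))]
    exact vnorm_mulVec_le _ _
  have hratpos : ∀ (n : ℕ) (x : ℝ),
      0 < vnorm ((coc α Bf n x).mulVec (U x)) / vnorm (U x) := fun n x =>
    div_pos (vnorm_pos (det_one_mulVec_ne (coc_det hBdet n x) (hU0 x))) (vnorm_pos (hU0 x))
  have hopNpos : ∀ (n : ℕ) (x : ℝ), 0 < opN (coc α Bf n x) := fun n x =>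
    lt_of_lt_of_le (hratpos n x) (hlow n x)
  -- upper bound
  have hup : ∀ (n : ℕ), ∀ x ∈ Set.Icc (0:ℝ) 1,
      opN (coc α Bf n x) ≤ K2 * (vnorm ((coc α Bf n x).mulVec (U x)) / vnorm (U x)) := by
    intro n x hx
    have hcocdet : (coc α Bf n x).det = 1 := coc_det hBdet n x
    obtain ⟨h1, h2⟩ := hgrow n x
    have hvU := vnorm_pos (hU0 x)
    have hvS := vnorm_pos (hS0 x)
    set X := vnorm ((coc α Bf n x).mulVec (U x)) with hXd
    set Y := vnorm ((coc α Bf n x).mulVec (S x)) with hYd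
    have hXpos : 0 < X := vnorm_pos (det_one_mulVec_ne hcocdet (hU0 x))
    have hYnn : 0 ≤ Y := vnorm_nonneg _
    have hlam0 : 0 < lam := lt_trans one_pos hlam
    have hlamn : 1 ≤ lam ^ n := one_le_pow₀ hlam.le
    have hY2 : Y ≤ C * vnorm (S x) := by
      refine h2.trans ?_
      rw [inv_pow]
      have h3 : (lam ^ n)⁻¹ ≤ 1 := by
        rw [inv_le_one_iff₀]
        right
        exact hlamn
      calc C * (lam ^ n)⁻¹ * vnorm (S x) ≤ C * 1 * vnorm (S x) :=
            mul_le_mul_of_nonneg_right (mul_le_mul_of_nonneg_left h3 hCpos.le) hvS.le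
        _ = C * vnorm (S x) := by ring
    have hX2 : vnorm (U x) ≤ C * X := by
      have h5 : C⁻¹ * vnorm (U x) ≤ C⁻¹ * lam ^ n * vnorm (U x) := by
        have := mul_le_mul_of_nonneg_right
          (mul_le_mul_of_nonneg_left hlamn (inv_pos.2 hCpos).le) hvU.le
        calc C⁻¹ * vnorm (U x) = C⁻¹ * 1 * vnorm (U x) := by ring
          _ ≤ C⁻¹ * lam ^ n * vnorm (U x) := this
      have h6 := le_trans h5 h1
      calc vnorm (U x) = C * (C⁻¹ * vnorm (U x)) := by
            rw [← mul_assoc, mul_inv_cancel₀ hCpos.ne', one_mul]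
        _ ≤ C * X := mul_le_mul_of_nonneg_left h6 hCpos.le
    apply opN_le_of_bound
      (mul_nonneg hK2pos.le (div_nonneg (vnorm_nonneg _) (vnorm_nonneg _)))
    intro v
    by_cases hv : v = 0
    · simp only [hv, Matrix.mulVec_zero, vnorm_zero, mul_zero, le_refl]
    set na := ‖crossDet v (S x) / crossDet (U x) (S x)‖ with hnad
    set nb := ‖crossDet (U x) v / crossDet (U x) (S x)‖ with hnbd
    set W := vnorm ((coc α Bf n x).mulVec v) with hWd
    have hdec : v = (crossDet v (S x) / crossDet (U x) (S x)) • U x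
        + (crossDet (U x) v / crossDet (U x) (S x)) • S x := decomp (U x) (S x) v (hCross x)
    have hMv : (coc α Bf n x).mulVec v
        = (crossDet v (S x) / crossDet (U x) (S x)) • (coc α Bf n x).mulVec (U x)
          + (crossDet (U x) v / crossDet (U x) (S x)) • (coc α Bf n x).mulVec (S x) := by
      conv_lhs => rw [hdec]
      rw [Matrix.mulVec_add, Matrix.mulVec_smul, Matrix.mulVec_smul]
    have hb1 : W ≤ na * X + nb * Y := by
      rw [hWd, hMv]
      refine (vnorm_add_le _ _).trans ?_
      rw [vnorm_smul, vnorm_smul]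
    have hΔ := hδle x hx
    have hΔpos : 0 < ‖crossDet (U x) (S x)‖ := norm_pos_iff.2 (hCross x)
    have haB : na * (δ * (vnorm (U x) * vnorm (S x))) ≤ vnorm v * vnorm (S x) := by
      rw [hnad, norm_div]
      calc ‖crossDet v (S x)‖ / ‖crossDet (U x) (S x)‖ * (δ * (vnorm (U x) * vnorm (S x)))
          ≤ ‖crossDet v (S x)‖ / ‖crossDet (U x) (S x)‖ * ‖crossDet (U x) (S x)‖ :=
            mul_le_mul_of_nonneg_left hΔ (by positivity)
        _ = ‖crossDet v (S x)‖ := div_mul_cancel₀ _ hΔpos.ne'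
        _ ≤ vnorm v * vnorm (S x) := norm_crossDet_le _ _
    have hbB : nb * (δ * (vnorm (U x) * vnorm (S x))) ≤ vnorm (U x) * vnorm v := by
      rw [hnbd, norm_div]
      calc ‖crossDet (U x) v‖ / ‖crossDet (U x) (S x)‖ * (δ * (vnorm (U x) * vnorm (S x)))
          ≤ ‖crossDet (U x) v‖ / ‖crossDet (U x) (S x)‖ * ‖crossDet (U x) (S x)‖ :=
            mul_le_mul_of_nonneg_left hΔ (by positivity)
        _ = ‖crossDet (U x) v‖ := div_mul_cancel₀ _ hΔpos.ne'
        _ ≤ vnorm (U x) * vnorm v := norm_crossDet_le _ _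
    have hna : 0 ≤ na := norm_nonneg _
    have hnb : 0 ≤ nb := norm_nonneg _
    have hvv : 0 ≤ vnorm v := vnorm_nonneg _
    have key2 : W * (δ * vnorm (U x)) ≤ (1 + C^2) * X * vnorm v := by
      have key : W * (δ * vnorm (U x)) * vnorm (S x)
          ≤ ((1 + C^2) * X * vnorm v) * vnorm (S x) := by
        have s1 := mul_le_mul_of_nonneg_right hb1
          (by positivity : (0:ℝ) ≤ δ * vnorm (U x) * vnorm (S x))
        have pa := mul_le_mul_of_nonneg_right haB hXpos.le
        have pb1 := mul_le_mul_of_nonneg_left hY2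
          (by positivity : (0:ℝ) ≤ nb * (δ * (vnorm (U x) * vnorm (S x))))
        have pb2 := mul_le_mul_of_nonneg_right hbB
          (by positivity : (0:ℝ) ≤ C * vnorm (S x))
        have p5 := mul_le_mul_of_nonneg_left hX2
          (by positivity : (0:ℝ) ≤ C * vnorm v * vnorm (S x))
        calc W * (δ * vnorm (U x)) * vnorm (S x)
            = W * (δ * vnorm (U x) * vnorm (S x)) := by ring
          _ ≤ (na * X + nb * Y) * (δ * vnorm (U x) * vnorm (S x)) := s1
          _ = na * (δ * (vnorm (U x) * vnorm (S x))) * X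
              + nb * (δ * (vnorm (U x) * vnorm (S x))) * Y := by ring
          _ ≤ (vnorm v * vnorm (S x)) * X
              + nb * (δ * (vnorm (U x) * vnorm (S x))) * (C * vnorm (S x)) :=
            add_le_add pa pb1
          _ ≤ (vnorm v * vnorm (S x)) * X + (vnorm (U x) * vnorm v) * (C * vnorm (S x)) :=
            (add_le_add_iff_left _).2 pb2
          _ = (vnorm v * vnorm (S x)) * X + (C * vnorm v * vnorm (S x)) * vnorm (U x) := by
            ring
          _ ≤ (vnorm v * vnorm (S x)) * X + (C * vnorm v * vnorm (S x)) * (C * X) :=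
            (add_le_add_iff_left _).2 p5
          _ = ((1 + C^2) * X * vnorm v) * vnorm (S x) := by ring
      exact le_of_mul_le_mul_right key hvS
    have hrw : K2 * (X / vnorm (U x)) * vnorm v
        = ((1 + C^2) * X * vnorm v) / (δ * vnorm (U x)) := by
      rw [hK2, div_mul_div_comm, div_mul_eq_mul_div]
    rw [hrw, le_div_iff₀ (mul_pos hδpos hvU)]
    exact key2
  -- telescoping of the integral
  have hGsum : ∀ (n : ℕ) (x : ℝ),
      Real.log (vnorm ((coc α Bf n x).mulVec (U x)) / vnorm (U x))
      = ∑ k ∈ Finset.range n, Real.log (per (x + k * α)) := by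
    intro n x
    obtain ⟨-, hnorm⟩ := coc_mulVec_unstable hU0 hBdet hUinv n x
    rw [hnorm, mul_comm, mul_div_assoc, div_self (vnorm_pos (hU0 x)).ne', mul_one]
    show Real.log (∏ k ∈ Finset.range n, per (x + k * α)) = _
    exact Real.log_prod (fun k _ => (hperpos (x + k * α)).ne')
  have hIstep : ∀ k : ℕ, (∫ x in (0:ℝ)..1, Real.log (per (x + k * α)))
      = ∫ x in (0:ℝ)..1, Real.log (per x) := by
    intro k
    rw [intervalIntegral.integral_comp_add_right (fun x => Real.log (per x)) (k * α)]
    have hper1 : Function.Periodic (fun x => Real.log (per x)) 1 := fun x => by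
      show Real.log (per (x + 1)) = Real.log (per x)
      rw [hperiodic_per x]
    have h := hper1.intervalIntegral_add_eq ((k : ℝ) * α) 0
    rw [zero_add] at h
    rw [show (0:ℝ) + k * α = (k : ℝ) * α from zero_add _,
      show (1:ℝ) + k * α = (k : ℝ) * α + 1 from add_comm _ _]
    exact h
  have hlogpercont : Continuous fun x => Real.log (per x) :=
    hpercont.log fun x => (hperpos x).ne'
  have hGint : ∀ n : ℕ,
      (∫ x in (0:ℝ)..1, Real.log (vnorm ((coc α Bf n x).mulVec (U x)) / vnorm (U x)))
      = n * ∫ x in (0:ℝ)..1, Real.log (per x) := by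
    intro n
    rw [intervalIntegral.integral_congr
      (g := fun x => ∑ k ∈ Finset.range n, Real.log (per (x + k * α)))
      (fun x _ => hGsum n x)]
    have hsplit : (∫ x in (0:ℝ)..1, ∑ k ∈ Finset.range n, Real.log (per (x + k * α)))
        = ∑ k ∈ Finset.range n, ∫ x in (0:ℝ)..1, Real.log (per (x + k * α)) :=
      intervalIntegral.integral_finset_sum (fun k _ =>
        (hlogpercont.comp (continuous_add_right ((k:ℝ) * α))).intervalIntegrable 0 1)
    rw [hsplit]
    simp only [hIstep]
    rw [Finset.sum_const, Finset.card_range, nsmul_eq_mul]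
  -- continuity of the integrands
  have hcontrat : ∀ n : ℕ, Continuous fun x =>
      Real.log (vnorm ((coc α Bf n x).mulVec (U x)) / vnorm (U x)) := by
    intro n
    exact ((continuous_vnorm.comp ((coc_continuous hBcont n).matrix_mulVec hUc)).div
      (continuous_vnorm.comp hUc) (fun x => (vnorm_pos (hU0 x)).ne')).log
      (fun x => (hratpos n x).ne')
  have hcontopN : ∀ n : ℕ, Continuous fun x => Real.log (opN (coc α Bf n x)) := fun n =>
    (continuous_opN.comp (coc_continuous hBcont n)).log fun x => (hopNpos n x).ne'
  -- the sandwich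
  have hsand : ∀ n : ℕ,
      (n : ℝ) * (∫ x in (0:ℝ)..1, Real.log (per x))
        ≤ (∫ x in (0:ℝ)..1, Real.log (opN (coc α Bf n x)))
      ∧ (∫ x in (0:ℝ)..1, Real.log (opN (coc α Bf n x)))
        ≤ (n : ℝ) * (∫ x in (0:ℝ)..1, Real.log (per x)) + Real.log K2 := by
    intro n
    constructor
    · rw [← hGint n]
      apply intervalIntegral.integral_mono_on zero_le_one
        ((hcontrat n).intervalIntegrable _ _) ((hcontopN n).intervalIntegrable _ _)
      intro x _
      exact Real.log_le_log (hratpos n x) (hlow n x)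
    · have h1 : (∫ x in (0:ℝ)..1, Real.log (opN (coc α Bf n x)))
          ≤ ∫ x in (0:ℝ)..1, (Real.log K2
            + Real.log (vnorm ((coc α Bf n x).mulVec (U x)) / vnorm (U x))) := by
        apply intervalIntegral.integral_mono_on zero_le_one
          ((hcontopN n).intervalIntegrable _ _)
          ((continuous_const.add (hcontrat n)).intervalIntegrable _ _)
        intro x hx
        calc Real.log (opN (coc α Bf n x))
            ≤ Real.log (K2 * (vnorm ((coc α Bf n x).mulVec (U x)) / vnorm (U x))) :=
              Real.log_le_log (hopNpos n x) (hup n x hx)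
          _ = _ := Real.log_mul hK2pos.ne' (hratpos n x).ne'
      rw [intervalIntegral.integral_add (intervalIntegrable_const)
        ((hcontrat n).intervalIntegrable _ _), intervalIntegral.integral_const,
        hGint n] at h1
      simp only [sub_zero, one_smul] at h1
      linarith [h1]
  -- conclusion
  have hmain : Tendsto (fun n : ℕ => (n:ℝ)⁻¹ * ∫ x in (0:ℝ)..1, Real.log (opN (coc α Bf n x)))
      atTop (nhds (∫ x in (0:ℝ)..1, Real.log (per x))) := by
    have hub : Tendsto (fun n : ℕ => (∫ x in (0:ℝ)..1, Real.log (per x))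
        + Real.log K2 * (n:ℝ)⁻¹) atTop (nhds (∫ x in (0:ℝ)..1, Real.log (per x))) := by
      have h0 : Tendsto (fun n : ℕ => (n:ℝ)⁻¹) atTop (nhds 0) :=
        tendsto_inv_atTop_nhds_zero_nat
      have := ((h0.const_mul (Real.log K2)).const_add (∫ x in (0:ℝ)..1, Real.log (per x)))
      simpa using this
    apply tendsto_of_tendsto_of_tendsto_of_le_of_le' tendsto_const_nhds hub
    · filter_upwards [eventually_ge_atTop 1] with n hn
      have hn0 : (0:ℝ) < n := by exact_mod_cast hn
      have := (hsand n).1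
      calc (∫ x in (0:ℝ)..1, Real.log (per x))
          = (n:ℝ)⁻¹ * ((n:ℝ) * (∫ x in (0:ℝ)..1, Real.log (per x))) := by
            field_simp
        _ ≤ (n:ℝ)⁻¹ * ∫ x in (0:ℝ)..1, Real.log (opN (coc α Bf n x)) := by
            apply mul_le_mul_of_nonneg_left this (by positivity)
    · filter_upwards [eventually_ge_atTop 1] with n hn
      have hn0 : (0:ℝ) < n := by exact_mod_cast hn
      have := (hsand n).2
      calc (n:ℝ)⁻¹ * ∫ x in (0:ℝ)..1, Real.log (opN (coc α Bf n x))
          ≤ (n:ℝ)⁻¹ * ((n:ℝ) * (∫ x in (0:ℝ)..1, Real.log (per x)) + Real.log K2) := by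
            apply mul_le_mul_of_nonneg_left this (by positivity)
        _ = (∫ x in (0:ℝ)..1, Real.log (per x)) + Real.log K2 * (n:ℝ)⁻¹ := by
            field_simp
  constructor
  · show Tendsto (fun n : ℕ => (n:ℝ)⁻¹ * ∫ x in (0:ℝ)..1, Real.log (opN (coc α Bf n x)))
      atTop (nhds (2 * Real.pi * θ + (1/2) * ∫ x in (0:ℝ)..1, phiF θ U x))
    rw [← hIper]
    exact hmain
  · show 2 * Real.pi * θ ≤ 2 * Real.pi * θ + (1/2) * ∫ x in (0:ℝ)..1, phiF θ U x
    have h0 : 0 ≤ ∫ x in (0:ℝ)..1, phiF θ U x := by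
      apply intervalIntegral.integral_nonneg zero_le_one
      intro x _
      apply Real.log_nonneg
      rw [le_div_iff₀ (hden_pos x)]
      have : ‖(U x 0 / U x 1 - Complex.I) / (U x 0 / U x 1 + Complex.I)‖ ^ 2
          ≤ Real.exp (8 * Real.pi * θ)
            * ‖(U x 0 / U x 1 - Complex.I) / (U x 0 / U x 1 + Complex.I)‖ ^ 2 :=
        le_mul_of_one_le_left (sq_nonneg _) hθ8one
      linarith
    linarith
end

section
/- Let Q : ℝ/ℤ → ℂ extend holomorphically to |Im z| < ε₀ with values bounded by M, and suppose that for two values t = ε₁ and t = -ε₁ (with 0 < ε₁ < ε₀) and every trigonometric monomial w(x) = γ e^{-2πikx} with k ∈ ℤ, |γ| = 1, one has |Re ∫_{ℝ/ℤ} Q(x + ti) w(x) dx| ≤ C′ δ⁻¹ e^{ε₂|k|} for some 0 < ε₂ < ε₁. Then every Fourier coefficient Q̂(k) of Q satisfies |Q̂(k)| ≤ C′ δ⁻¹ e^{(ε₂-ε₁)|k|}, and consequently sup_{x ∈ ℝ} |Q(x)| ≤ C δ⁻¹ with C depending only on ε₁, ε₂, C′. -/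
open Matrix Complex Filter

open Complex intervalIntegral Set in
open scoped Interval in
private lemma stmt9_shift {ε₀ : ℝ} {g : ℂ → ℂ}
    (hd : DifferentiableOn ℂ g {z : ℂ | |z.im| < ε₀})
    (hper : ∀ z, g (z + 1) = g z) {t : ℝ} (ht : |t| < ε₀) :
    (∫ x in (0:ℝ)..1, g (x + t * Complex.I)) = ∫ x in (0:ℝ)..1, g x := by
  have hsub : ([[(0:ℂ).re, ((1:ℂ) + t*I).re]] ×ℂ [[(0:ℂ).im, ((1:ℂ)+t*I).im]]) ⊆ {z : ℂ | |z.im| < ε₀} := by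
    intro z hz
    have h2 := hz.2
    simp only [Complex.add_im, Complex.one_im, Complex.mul_I_im, Complex.ofReal_re, zero_add,
      Complex.zero_im, mem_preimage, mem_uIcc] at h2
    simp only [mem_setOf_eq]
    have : |z.im| ≤ |t| := by
      rw [abs_le]
      rcases h2 with h | h <;> constructor <;> nlinarith [neg_abs_le t, le_abs_self t]
    linarith
  have H := Complex.integral_boundary_rect_eq_zero_of_differentiableOn g 0 ((1:ℂ) + t*I)
    (hd.mono hsub)
  simp only [Complex.zero_re, Complex.zero_im, Complex.add_re, Complex.one_re,
    Complex.mul_I_re, Complex.ofReal_im, neg_zero, add_zero, Complex.add_im, Complex.one_im,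
    Complex.mul_I_im, Complex.ofReal_re, zero_add] at H
  have hv : (∫ y in (0:ℝ)..t, g (((1:ℝ):ℂ) + y * I)) = ∫ y in (0:ℝ)..t, g (((0:ℝ):ℂ) + y * I) := by
    refine intervalIntegral.integral_congr fun y _ => ?_
    have h1 := hper ((y:ℂ) * I)
    push_cast
    rw [zero_add, add_comm]
    exact h1
  have h0 : (∫ x in (0:ℝ)..1, g ((x:ℂ) + ((0:ℝ):ℂ) * I)) = ∫ x in (0:ℝ)..1, g x := by
    refine intervalIntegral.integral_congr fun x _ => ?_
    push_cast
    rw [zero_mul, add_zero]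
  push_cast at H hv h0
  rw [hv] at H
  rw [← h0]
  simp only [smul_eq_mul] at H
  linear_combination -H

/-- Fourier-coefficient bounds from boundary testing, and the sup bound. -/
theorem stmt9 (ε₁ ε₂ C' : ℝ) (h2 : 0 < ε₂) (h21 : ε₂ < ε₁) (hC' : 0 < C') :
    ∃ C > 0, ∀ (ε₀ δ M : ℝ) (F : ℂ → ℂ), ε₁ < ε₀ → 0 < δ →
      DifferentiableOn ℂ F {z : ℂ | |z.im| < ε₀} →
      (∀ z : ℂ, F (z + 1) = F z) →
      (∀ z : ℂ, |z.im| < ε₀ → ‖F z‖ ≤ M) →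
      (∀ t : ℝ, (t = ε₁ ∨ t = -ε₁) → ∀ k : ℤ, ∀ γ : ℂ, ‖γ‖ = 1 →
        |(∫ x in (0:ℝ)..1, F (x + t * Complex.I) * γ *
            Complex.exp (-2 * Real.pi * Complex.I * k * x)).re|
          ≤ C' * δ⁻¹ * Real.exp (ε₂ * |(k : ℝ)|)) →
      (∀ k : ℤ, ‖∫ x in (0:ℝ)..1, F x * Complex.exp (-2 * Real.pi * Complex.I * k * x)‖
          ≤ C' * δ⁻¹ * Real.exp ((ε₂ - ε₁) * |(k : ℝ)|)) ∧
      (∀ x : ℝ, ‖F x‖ ≤ C * δ⁻¹) := by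
  classical
  have hε₁ : 0 < ε₁ := lt_trans h2 h21
  have hsumE : Summable (fun k : ℤ => Real.exp ((ε₂ - ε₁) * |(k : ℝ)|)) := by
    have heq : ∀ k : ℤ, Real.exp ((ε₂ - ε₁) * |(k : ℝ)|) = Real.exp (ε₂ - ε₁) ^ k.natAbs := by
      intro k
      rw [← Real.exp_nat_mul]
      congr 1
      rw [Nat.cast_natAbs]
      push_cast
      ring
    simp only [heq]
    have hr1 : Real.exp (ε₂ - ε₁) < 1 := Real.exp_lt_one_iff.2 (by linarith)
    refine Summable.of_nat_of_neg ?_ ?_ <;>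
      simpa using summable_geometric_of_lt_one (Real.exp_pos _).le hr1
  set S : ℝ := ∑' k : ℤ, Real.exp ((ε₂ - ε₁) * |(k : ℝ)|) with hSdef
  have hS1 : (1:ℝ) ≤ S := by
    have h0 : Real.exp ((ε₂ - ε₁) * |((0:ℤ):ℝ)|) ≤ S :=
      Summable.le_tsum hsumE 0 (fun j _ => (Real.exp_pos _).le)
    simpa using h0
  refine ⟨C' * S, mul_pos hC' (lt_of_lt_of_le one_pos hS1), ?_⟩
  intro ε₀ δ M F hε hδ hdF hper hbd htest
  have hFc : ∀ k : ℤ, ‖∫ x in (0:ℝ)..1, F x * Complex.exp (-2 * Real.pi * Complex.I * k * x)‖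
      ≤ C' * δ⁻¹ * Real.exp ((ε₂ - ε₁) * |(k : ℝ)|) := by
    intro k
    set g : ℂ → ℂ := fun z => F z * Complex.exp (-2 * Real.pi * Complex.I * k * z) with hgdef
    have hgd : DifferentiableOn ℂ g {z : ℂ | |z.im| < ε₀} := by
      refine hdF.mul (Differentiable.differentiableOn ?_)
      exact Complex.differentiable_exp.comp (differentiable_id.const_mul _)
    have hgper : ∀ z, g (z + 1) = g z := by
      intro z
      have he : Complex.exp (-2 * Real.pi * Complex.I * k * (z + 1))
          = Complex.exp (-2 * Real.pi * Complex.I * k * z) := by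
        rw [mul_add, mul_one, Complex.exp_add]
        have : (-2 * (Real.pi:ℂ) * Complex.I * k) = ((-k : ℤ) : ℂ) * (2 * Real.pi * Complex.I) := by
          push_cast; ring
        rw [this, Complex.exp_int_mul_two_pi_mul_I, mul_one]
      simp only [hgdef]
      rw [hper, he]
    set t : ℝ := if 0 ≤ k then -ε₁ else ε₁ with htdef
    have hteps : t = ε₁ ∨ t = -ε₁ := by by_cases h : 0 ≤ k <;> simp [htdef, h]
    have htabs : |t| < ε₀ := by
      rcases hteps with h | h <;> rw [h]
      · rw [abs_of_pos hε₁]; exact hε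
      · rw [abs_neg, abs_of_pos hε₁]; exact hε
    have hkt : 2 * Real.pi * k * t ≤ -(ε₁ * |(k:ℝ)|) := by
      by_cases h : 0 ≤ k
      · have ht' : t = -ε₁ := by simp [htdef, h]
        have hk0 : |(k:ℝ)| = (k:ℝ) := abs_of_nonneg (by exact_mod_cast h)
        rw [ht', hk0]
        have hk' : (0:ℝ) ≤ (k:ℝ) := by exact_mod_cast h
        nlinarith [Real.pi_gt_three, mul_nonneg (by nlinarith [Real.pi_gt_three] : (0:ℝ) ≤ 2*Real.pi - 1)
          (mul_nonneg hk' hε₁.le)]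
      · have ht' : t = ε₁ := by simp [htdef, h]
        push_neg at h
        have hk0 : |(k:ℝ)| = -(k:ℝ) := abs_of_neg (by exact_mod_cast h)
        rw [ht', hk0]
        have hk1 : k ≤ -1 := by omega
        have hkneg : (k:ℝ) ≤ -1 := by exact_mod_cast hk1
        nlinarith [Real.pi_gt_three, mul_nonneg (by nlinarith [Real.pi_gt_three] : (0:ℝ) ≤ 2*Real.pi - 1)
          (mul_nonneg (by linarith : (0:ℝ) ≤ -(k:ℝ)) hε₁.le)]
    -- the shifted integral
    set v : ℂ := ∫ x in (0:ℝ)..1, F (x + t * Complex.I) * Complex.exp (-2 * Real.pi * Complex.I * k * x) with hvdef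
    have hsplit : ∀ x : ℝ, g ((x:ℂ) + t * Complex.I)
        = (Real.exp (2 * Real.pi * k * t) : ℂ) * (F ((x:ℂ) + t * Complex.I) * Complex.exp (-2 * Real.pi * Complex.I * k * x)) := by
      intro x
      simp only [hgdef]
      have harg : (-2 * (Real.pi:ℂ) * Complex.I * k * ((x:ℂ) + t * Complex.I))
          = (-2 * (Real.pi:ℂ) * Complex.I * k * x) + ((2 * Real.pi * k * t : ℝ) : ℂ) := by
        push_cast
        linear_combination (-2 * (Real.pi:ℂ) * k * t) * Complex.I_sq
      rw [harg, Complex.exp_add, Complex.ofReal_exp]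
      ring
    have hshift : (∫ x in (0:ℝ)..1, g ((x:ℂ) + t * Complex.I)) = ∫ x in (0:ℝ)..1, g x :=
      stmt9_shift hgd hgper htabs
    have hFc : (∫ x in (0:ℝ)..1, F x * Complex.exp (-2 * Real.pi * Complex.I * k * x))
        = (Real.exp (2 * Real.pi * k * t) : ℂ) * v := by
      rw [← hshift, intervalIntegral.integral_congr (g := fun x : ℝ =>
        (Real.exp (2 * Real.pi * k * t) : ℂ) * (F ((x:ℂ) + t * Complex.I) * Complex.exp (-2 * Real.pi * Complex.I * k * x)))
        (fun x _ => hsplit x), intervalIntegral.integral_const_mul]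
    -- bound on ‖v‖
    have hv : ‖v‖ ≤ C' * δ⁻¹ * Real.exp (ε₂ * |(k:ℝ)|) := by
      by_cases hv0 : v = 0
      · rw [hv0, norm_zero]; positivity
      · set γ : ℂ := (‖v‖ : ℂ) / v with hγdef
        have hγ : ‖γ‖ = 1 := by
          rw [hγdef, norm_div, Complex.norm_real, Real.norm_eq_abs, abs_norm,
            div_self (norm_ne_zero_iff.2 hv0)]
        have hint : (∫ x in (0:ℝ)..1, F (x + t * Complex.I) * γ *
            Complex.exp (-2 * Real.pi * Complex.I * k * x)) = γ * v := by
          rw [hvdef, ← intervalIntegral.integral_const_mul]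
          exact intervalIntegral.integral_congr fun x _ => by ring
        have := htest t hteps k γ hγ
        rw [hint, hγdef, div_mul_cancel₀ _ hv0] at this
        simpa using this
    calc ‖∫ x in (0:ℝ)..1, F x * Complex.exp (-2 * Real.pi * Complex.I * k * x)‖
        = Real.exp (2 * Real.pi * k * t) * ‖v‖ := by
          rw [hFc, norm_mul, Complex.norm_real, Real.norm_eq_abs, abs_of_pos (Real.exp_pos _)]
      _ ≤ Real.exp (2 * Real.pi * k * t) * (C' * δ⁻¹ * Real.exp (ε₂ * |(k:ℝ)|)) := by
          exact mul_le_mul_of_nonneg_left hv (Real.exp_pos _).le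
      _ = C' * δ⁻¹ * Real.exp (ε₂ * |(k:ℝ)| + 2 * Real.pi * k * t) := by
          rw [Real.exp_add]; ring
      _ ≤ C' * δ⁻¹ * Real.exp ((ε₂ - ε₁) * |(k:ℝ)|) := by
          refine mul_le_mul_of_nonneg_left (Real.exp_le_exp.2 ?_) (by positivity)
          nlinarith [abs_nonneg ((k:ℝ))]
  refine ⟨hFc, ?_⟩
  haveI : Fact (0 < (1:ℝ)) := ⟨one_pos⟩
  -- summability of the majorant
  have hsumE : Summable (fun k : ℤ => Real.exp ((ε₂ - ε₁) * |(k : ℝ)|)) := by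
    have heq : ∀ k : ℤ, Real.exp ((ε₂ - ε₁) * |(k : ℝ)|) = Real.exp (ε₂ - ε₁) ^ k.natAbs := by
      intro k
      rw [← Real.exp_nat_mul]
      congr 1
      rw [Nat.cast_natAbs]
      push_cast
      ring
    simp only [heq]
    have hr1 : Real.exp (ε₂ - ε₁) < 1 := Real.exp_lt_one_iff.2 (by linarith)
    refine Summable.of_nat_of_neg ?_ ?_ <;>
      simpa using summable_geometric_of_lt_one (Real.exp_pos _).le hr1
  -- continuity and periodicity on ℝ
  have hFcont : Continuous fun x : ℝ => F x := by
    refine ContinuousOn.comp_continuous hdF.continuousOn Complex.continuous_ofReal fun x => ?_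
    simp only [Set.mem_setOf_eq, Complex.ofReal_im, abs_zero]
    linarith
  have hperR : Function.Periodic (fun x : ℝ => F x) 1 := fun x => by
    dsimp only
    push_cast
    exact hper x
  set f : AddCircle (1:ℝ) → ℂ := hperR.lift with hfdef
  have hfcont : Continuous f := hFcont.quotient_liftOn' _
  set fC : C(AddCircle (1:ℝ), ℂ) := ⟨f, hfcont⟩ with hfCdef
  have hcoeff : ∀ k : ℤ, fourierCoeff (⇑fC) k
      = ∫ x in (0:ℝ)..1, F x * Complex.exp (-2 * Real.pi * Complex.I * k * x) := by
    intro k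
    rw [fourierCoeff_eq_intervalIntegral (⇑fC) k 0]
    rw [zero_add, show (1/(1:ℝ)) = 1 by norm_num, one_smul]
    refine intervalIntegral.integral_congr fun x _ => ?_
    rw [smul_eq_mul, fourier_coe_apply]
    show _ * f _ = _
    rw [hfdef, Function.Periodic.lift_coe, mul_comm]
    congr 1
    push_cast
    ring
  have hnb : ∀ k : ℤ, ‖fourierCoeff (⇑fC) k‖ ≤ (C' * δ⁻¹) * Real.exp ((ε₂ - ε₁) * |(k : ℝ)|) := by
    intro k
    rw [hcoeff k, mul_assoc] at *
    simpa [mul_assoc] using hFc k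
  have hsumb : Summable (fun k : ℤ => (C' * δ⁻¹) * Real.exp ((ε₂ - ε₁) * |(k : ℝ)|)) :=
    hsumE.mul_left _
  have hsummable : Summable (fourierCoeff (⇑fC)) :=
    Summable.of_norm_bounded hsumb hnb
  have hsn : Summable fun k : ℤ => ‖fourierCoeff (⇑fC) k • (fourier k : C(AddCircle (1:ℝ), ℂ))‖ := by
    refine Summable.of_nonneg_of_le (fun _ => norm_nonneg _) (fun k => ?_) hsumb
    rw [norm_smul, fourier_norm, mul_one]
    exact hnb k
  have hsum := hasSum_fourier_series_of_summable hsummable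
  intro x
  have hx : F (x:ℝ) = fC ((x:ℝ) : AddCircle (1:ℝ)) := (hperR.lift_coe x).symm
  calc ‖F (x:ℝ)‖ = ‖fC ((x:ℝ) : AddCircle (1:ℝ))‖ := by rw [hx]
    _ ≤ ‖fC‖ := fC.norm_coe_le_norm _
    _ = ‖∑' k : ℤ, fourierCoeff (⇑fC) k • (fourier k : C(AddCircle (1:ℝ), ℂ))‖ := by
        rw [hsum.tsum_eq]
    _ ≤ ∑' k : ℤ, ‖fourierCoeff (⇑fC) k • (fourier k : C(AddCircle (1:ℝ), ℂ))‖ :=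
        norm_tsum_le_tsum_norm hsn
    _ ≤ ∑' k : ℤ, (C' * δ⁻¹) * Real.exp ((ε₂ - ε₁) * |(k : ℝ)|) := by
        refine Summable.tsum_le_tsum (fun k => ?_) hsn hsumb
        rw [norm_smul, fourier_norm, mul_one]
        exact hnb k
    _ = (C' * δ⁻¹) * ∑' k : ℤ, Real.exp ((ε₂ - ε₁) * |(k : ℝ)|) := tsum_mul_left
    _ = (C' * ∑' k : ℤ, Real.exp ((ε₂ - ε₁) * |(k : ℝ)|)) * δ⁻¹ := by ring
end
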